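/- There is a constant C > 0 such that for every n ≥ 2 and every finite set A with |A| = 2, there exists a complete n-universal transformation f̂ : A^{2n+3} → A^{2n+3} of size 2n+3 whose maximal sequential time satisfies st^max_{f̂} ≤ 3n·2^{n·2^n + n} + C·2^{n·2^n + n}. -/

import Mathlib

/-- The instruction of `A^m` induced by the `i`-th coordinate function of `f`. -/
def instr {A : Type*} {m : ℕ} (f : (Fin m → A) → Fin m → A) (i : Fin m) :
    (Fin m → A) → Fin m → A :=
  fun x => Function.update x i (f x i)

/-- Apply a list of induced instructions of `f`, first element of the list first. -/
def applyInstrs {A : Type*} {m : ℕ} (f : (Fin m → A) → Fin m → A) :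
    List (Fin m) → (Fin m → A) → Fin m → A
  | [], x => x
  | i :: l, x => applyInstrs f l (instr f i x)

/-- Projection of `A^m` onto the first `n` coordinates. -/
def pr {A : Type*} {m n : ℕ} (hmn : n ≤ m) (x : Fin m → A) : Fin n → A :=
  fun i => x (Fin.castLE hmn i)

/-- `hs` witnesses that `f` sequentially simulates the sequence `gs`: the `k`-th
element of `hs` is a nonempty list of instruction indices expressing `h^(k) ∈ S_f`,
and for each `i` the composition `h^(1) ∘ ⋯ ∘ h^(i)` simulates `g^(i)`. -/
def SeqWitness {A : Type*} {m n : ℕ} (hmn : n ≤ m)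
    (f : (Fin m → A) → Fin m → A)
    (gs : List ((Fin n → A) → Fin n → A))
    (hs : List (List (Fin m))) : Prop :=
  hs.length = gs.length ∧ (∀ l ∈ hs, l ≠ []) ∧
    ∀ (i : ℕ) (hi : i < gs.length) (x : Fin m → A),
      gs.get ⟨i, hi⟩ (pr hmn x) = pr hmn (applyInstrs f ((hs.take (i + 1)).flatten) x)

/-!
Registers: output `o` (the first `n` coordinates, those seen by `pr`), copy `c`, switch `s`,
memory `m` and a spare bit. The coordinate functions are `o_j := if c = 0 then s else o_j`,
`c_k := if s then ¬c_k else o_k`, `s := ¬m ∧ ¬s` and `m := s`; thanks to `m`, a fixed program of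
four instructions clears `s` and `m` from any state. The first program copies the input `u` into
`c`, where it stays. Each `g` is then computed by a sweep over all `v : Bool^n`: xor `v` into `c`
(with `s = 1`), write `g v` into `o` (which takes effect only if `c = u ⊕ v = 0`, i.e. `v = u`),
and xor `v` back. That is `3n + 6` instructions per `v`, hence `(3n + 6)·2^n + O(1)` per `g`, and
there are `2^(n·2^n)` maps `g`. Any two-element alphabet is reached by transport along `A ≃ Bool`.
-/

lemma applyInstrs_append {A : Type*} {m : ℕ} (f : (Fin m → A) → Fin m → A)
    (l₁ l₂ : List (Fin m)) (x : Fin m → A) :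
    applyInstrs f (l₁ ++ l₂) x = applyInstrs f l₂ (applyInstrs f l₁ x) := by
  induction l₁ generalizing x with
  | nil => rfl
  | cons i l ih => exact ih _

lemma applyInstrs_map_of_instr_update {A ι β : Type*} [DecidableEq ι] {m : ℕ}
    {f : (Fin m → A) → Fin m → A} (F : (ι → β) → Fin m → A) (idx : ι → Fin m)
    (φ : ι → β → β) (hF : ∀ a k, instr f (idx k) (F a) = F (Function.update a k (φ k (a k))))
    {l : List ι} (hl : l.Nodup) (a : ι → β) :
    applyInstrs f (l.map idx) (F a) = F (fun k => if k ∈ l then φ k (a k) else a k) := by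
  induction l generalizing a with
  | nil => simp [applyInstrs]
  | cons k l ih =>
    rw [List.map_cons, applyInstrs, hF, ih (List.nodup_cons.1 hl).2]
    congr 1
    funext k'
    obtain rfl | hk' := eq_or_ne k' k
    · simp [(List.nodup_cons.1 hl).1]
    · simp [hk']

lemma length_flatten_map_le {α β : Type*} (F : α → List β) {B : ℕ}
    (hF : ∀ a, (F a).length ≤ B) (l : List α) : (l.map F).flatten.length ≤ l.length * B := by
  induction l with
  | nil => simp
  | cons a l ih =>
    simp only [List.map_cons, List.flatten_cons, List.length_append, List.length_cons]
    nlinarith [hF a]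

section Transport

variable {A B : Type*} {m n : ℕ}

abbrev coordEquiv (e : A ≃ B) (m : ℕ) : (Fin m → A) ≃ (Fin m → B) :=
  Equiv.piCongrRight fun _ => e

lemma instr_conj (e : A ≃ B) (f : (Fin m → A) → Fin m → A) (i : Fin m) (x : Fin m → A) :
    instr ((coordEquiv e m).conj f) i (coordEquiv e m x) = coordEquiv e m (instr f i x) := by
  funext t
  obtain rfl | ht := eq_or_ne t i <;> simp [instr, *]

lemma applyInstrs_conj (e : A ≃ B) (f : (Fin m → A) → Fin m → A) (l : List (Fin m))
    (x : Fin m → A) :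
    applyInstrs ((coordEquiv e m).conj f) l (coordEquiv e m x) =
      coordEquiv e m (applyInstrs f l x) := by
  induction l generalizing x with
  | nil => rfl
  | cons i l ih => rw [applyInstrs, instr_conj, ih]; rfl

lemma pr_coordEquiv (hmn : n ≤ m) (e : A ≃ B) (x : Fin m → A) :
    pr hmn (coordEquiv e m x) = coordEquiv e n (pr hmn x) :=
  rfl

theorem SeqWitness.conj {hmn : n ≤ m} {f : (Fin m → A) → Fin m → A}
    {gs : List ((Fin n → A) → Fin n → A)} {hs : List (List (Fin m))}
    (h : SeqWitness hmn f gs hs) (e : A ≃ B) :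
    SeqWitness hmn ((coordEquiv e m).conj f) (gs.map (coordEquiv e n).conj) hs := by
  refine ⟨by simp [h.1], h.2.1, fun i hi x => ?_⟩
  obtain ⟨y, rfl⟩ := (coordEquiv e m).surjective x
  rw [applyInstrs_conj]
  funext j
  simpa [pr_coordEquiv, pr] using congrArg e (congrFun (h.2.2 i (by simpa using hi) y) j)

end Transport

namespace UniversalMachine

variable {n : ℕ}

def slot (n : ℕ) : Fin n ⊕ Fin n ⊕ Fin 3 ≃ Fin (2 * n + 3) :=
  (Equiv.sumCongr (.refl _) finSumFinEquiv).trans (finSumFinEquiv.trans (finCongr (by omega)))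

def outReg (j : Fin n) : Fin (2 * n + 3) := slot n (.inl j)
def copyReg (k : Fin n) : Fin (2 * n + 3) := slot n (.inr (.inl k))
def switchReg : Fin (2 * n + 3) := slot n (.inr (.inr 0))
def memReg : Fin (2 * n + 3) := slot n (.inr (.inr 1))
def spareReg : Fin (2 * n + 3) := slot n (.inr (.inr 2))

def mkState (o c : Fin n → Bool) (s m z : Bool) : Fin (2 * n + 3) → Bool :=
  Sum.elim o (Sum.elim c ![s, m, z]) ∘ (slot n).symm

variable {o c : Fin n → Bool} {s m z : Bool}

@[simp] lemma mkState_outReg (j : Fin n) : mkState o c s m z (outReg j) = o j := by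
  simp [mkState, outReg]

@[simp] lemma mkState_copyReg (k : Fin n) : mkState o c s m z (copyReg k) = c k := by
  simp [mkState, copyReg]

@[simp] lemma mkState_switchReg : mkState o c s m z switchReg = s := by
  simp [mkState, switchReg]

@[simp] lemma mkState_memReg : mkState o c s m z memReg = m := by
  simp [mkState, memReg]

@[simp] lemma mkState_spareReg : mkState o c s m z spareReg = z := by
  simp [mkState, spareReg]

lemma eq_mkState (x : Fin (2 * n + 3) → Bool) :
    x = mkState (fun j => x (outReg j)) (fun k => x (copyReg k)) (x switchReg) (x memReg)
      (x spareReg) := by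
  ext i
  obtain ⟨a, rfl⟩ := (slot n).surjective i
  rcases a with j | k | t
  · simp [mkState, outReg]
  · simp [mkState, copyReg]
  · fin_cases t <;> simp [mkState, switchReg, memReg, spareReg]

lemma pr_eq (h : n ≤ 2 * n + 3) (x : Fin (2 * n + 3) → Bool) :
    pr h x = fun j => x (outReg j) :=
  rfl

lemma update_comp_slot_symm (F : Fin n ⊕ Fin n ⊕ Fin 3 → Bool) (a : Fin n ⊕ Fin n ⊕ Fin 3)
    (b : Bool) :
    Function.update (F ∘ (slot n).symm) (slot n a) b = Function.update F a b ∘ (slot n).symm := by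
  rw [Function.update_comp_equiv, Equiv.symm_symm]

@[simp] lemma update_outReg (j : Fin n) (b : Bool) :
    Function.update (mkState o c s m z) (outReg j) b =
      mkState (Function.update o j b) c s m z := by
  rw [mkState, outReg, update_comp_slot_symm, Sum.update_elim_inl]
  rfl

@[simp] lemma update_copyReg (k : Fin n) (b : Bool) :
    Function.update (mkState o c s m z) (copyReg k) b =
      mkState o (Function.update c k b) s m z := by
  rw [mkState, copyReg, update_comp_slot_symm, Sum.update_elim_inr, Sum.update_elim_inl]
  rfl

@[simp] lemma update_switchReg (b : Bool) :
    Function.update (mkState o c s m z) switchReg b = mkState o c b m z := by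
  rw [mkState, switchReg, update_comp_slot_symm, Sum.update_elim_inr, Sum.update_elim_inr]
  have : Function.update ![s, m, z] 0 b = ![b, m, z] := by
    ext t; fin_cases t <;> rfl
  rw [this]
  rfl

@[simp] lemma update_memReg (b : Bool) :
    Function.update (mkState o c s m z) memReg b = mkState o c s b z := by
  rw [mkState, memReg, update_comp_slot_symm, Sum.update_elim_inr, Sum.update_elim_inr]
  have : Function.update ![s, m, z] 1 b = ![s, b, z] := by
    ext t; fin_cases t <;> rfl
  rw [this]
  rfl

/-- The spare register only pads the size up to `2n + 3`. -/
def universalMap (n : ℕ) (x : Fin (2 * n + 3) → Bool) : Fin (2 * n + 3) → Bool :=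
  mkState (fun j => if ∀ k, x (copyReg k) = false then x switchReg else x (outReg j))
    (fun k => if x switchReg then !x (copyReg k) else x (outReg k))
    (!x memReg && !x switchReg) (x switchReg) (x spareReg)

@[simp] lemma instr_outReg (j : Fin n) :
    instr (universalMap n) (outReg j) (mkState o c s m z) =
      mkState (Function.update o j (if ∀ k, c k = false then s else o j)) c s m z := by
  simp [instr, universalMap]

@[simp] lemma instr_copyReg (k : Fin n) :
    instr (universalMap n) (copyReg k) (mkState o c s m z) =
      mkState o (Function.update c k (if s then !c k else o k)) s m z := by
  simp [instr, universalMap]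

@[simp] lemma instr_switchReg :
    instr (universalMap n) switchReg (mkState o c s m z) = mkState o c (!m && !s) m z := by
  simp [instr, universalMap]

@[simp] lemma instr_memReg :
    instr (universalMap n) memReg (mkState o c s m z) = mkState o c s s z := by
  simp [instr, universalMap]

def resetProg : List (Fin (2 * n + 3)) := [memReg, switchReg, switchReg, memReg]

lemma applyInstrs_resetProg :
    applyInstrs (universalMap n) resetProg (mkState o c s m z) = mkState o c false false z := by
  cases s <;> cases m <;> simp [resetProg, applyInstrs]

def copyProg (n : ℕ) : List (Fin (2 * n + 3)) := (List.finRange n).map copyReg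

lemma applyInstrs_copyProg :
    applyInstrs (universalMap n) (copyProg n) (mkState o c false m z) =
      mkState o o false m z := by
  rw [copyProg, applyInstrs_map_of_instr_update (mkState o · false m z) copyReg (fun k _ => o k)
    (fun _ _ => by simp) (List.nodup_finRange n)]
  simp

def toggleProg (v : Fin n → Bool) : List (Fin (2 * n + 3)) :=
  switchReg :: ((List.finRange n).filter v).map copyReg ++ [switchReg]

lemma applyInstrs_toggleProg (v : Fin n → Bool) :
    applyInstrs (universalMap n) (toggleProg v) (mkState o c false false z) =
      mkState o (fun k => xor (c k) (v k)) false false z := by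
  simp only [toggleProg, List.cons_append, applyInstrs, instr_switchReg, applyInstrs_append,
    Bool.not_false, Bool.and_self]
  rw [applyInstrs_map_of_instr_update (mkState o · true false z) copyReg (fun _ b => !b)
      (fun _ _ => by simp) ((List.nodup_finRange n).filter _)]
  simp only [instr_switchReg]
  congr 1
  funext k
  cases hv : v k <;> simp [hv]

def writeProg (w : Fin n → Bool) : List (Fin (2 * n + 3)) :=
  ((List.finRange n).filter (!w ·)).map outReg ++
    switchReg :: ((List.finRange n).filter w).map outReg ++ [switchReg]

lemma applyInstrs_writeProg (w : Fin n → Bool) :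
    applyInstrs (universalMap n) (writeProg w) (mkState o c false false z) =
      mkState (if ∀ k, c k = false then w else o) c false false z := by
  simp only [writeProg, applyInstrs_append]
  rw [applyInstrs_map_of_instr_update (mkState · c false false z) outReg _
    (fun _ _ => instr_outReg _) ((List.nodup_finRange n).filter _)]
  simp only [applyInstrs, instr_switchReg, Bool.not_false, Bool.and_self]
  rw [applyInstrs_map_of_instr_update (mkState · c true false z) outReg _
    (fun _ _ => instr_outReg _) ((List.nodup_finRange n).filter _)]
  simp only [instr_switchReg, Bool.not_false, Bool.not_true, Bool.and_false]
  congr 1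
  funext j
  by_cases hc : ∀ k, c k = false <;> cases hw : w j <;> simp [hc, hw]

def caseProg (g : (Fin n → Bool) → Fin n → Bool) (v : Fin n → Bool) : List (Fin (2 * n + 3)) :=
  toggleProg v ++ writeProg (g v) ++ toggleProg v

lemma applyInstrs_caseProg (g : (Fin n → Bool) → Fin n → Bool) (u v : Fin n → Bool) :
    applyInstrs (universalMap n) (caseProg g v) (mkState o u false false z) =
      mkState (if u = v then g v else o) u false false z := by
  simp [caseProg, applyInstrs_append, applyInstrs_toggleProg, applyInstrs_writeProg, funext_iff]

def sweepProg (g : (Fin n → Bool) → Fin n → Bool) (vs : List (Fin n → Bool)) :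
    List (Fin (2 * n + 3)) :=
  vs.flatMap (caseProg g)

lemma applyInstrs_sweepProg (g : (Fin n → Bool) → Fin n → Bool) (vs : List (Fin n → Bool))
    (u : Fin n → Bool) :
    applyInstrs (universalMap n) (sweepProg g vs) (mkState o u false false z) =
      mkState (if u ∈ vs then g u else o) u false false z := by
  induction vs generalizing o with
  | nil => simp [sweepProg, applyInstrs]
  | cons v vs ih =>
    rw [sweepProg, List.flatMap_cons, applyInstrs_append, applyInstrs_caseProg, ← sweepProg, ih]
    by_cases h : u = v <;> simp [h]

noncomputable def stepProg (g : (Fin n → Bool) → Fin n → Bool) : List (Fin (2 * n + 3)) :=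
  resetProg ++ sweepProg g (Finset.univ : Finset (Fin n → Bool)).toList

lemma applyInstrs_stepProg (g : (Fin n → Bool) → Fin n → Bool) (x : Fin (2 * n + 3) → Bool) :
    applyInstrs (universalMap n) (stepProg g) x =
      mkState (g fun k => x (copyReg k)) (fun k => x (copyReg k)) false false (x spareReg) := by
  conv_lhs => rw [eq_mkState x]
  simp [stepProg, applyInstrs_append, applyInstrs_resetProg, applyInstrs_sweepProg]

def initProg (n : ℕ) : List (Fin (2 * n + 3)) := resetProg ++ copyProg n

lemma applyInstrs_initProg (x : Fin (2 * n + 3) → Bool) :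
    applyInstrs (universalMap n) (initProg n) x =
      mkState (fun j => x (outReg j)) (fun j => x (outReg j)) false false (x spareReg) := by
  conv_lhs => rw [eq_mkState x]
  rw [initProg, applyInstrs_append, applyInstrs_resetProg, applyInstrs_copyProg]

lemma applyInstrs_flatten_take_stepProg (gs : List ((Fin n → Bool) → Fin n → Bool)) {i : ℕ}
    (hi : i < gs.length) (x : Fin (2 * n + 3) → Bool) :
    applyInstrs (universalMap n) ((gs.take (i + 1)).map stepProg).flatten x =
      mkState (gs[i] fun k => x (copyReg k)) (fun k => x (copyReg k)) false false
        (x spareReg) := by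
  induction gs generalizing i x with
  | nil => simp at hi
  | cons g gs ih =>
    cases i with
    | zero => simp [applyInstrs_stepProg]
    | succ i =>
      rw [List.take_succ_cons, List.map_cons, List.flatten_cons, applyInstrs_append,
        applyInstrs_stepProg, ih (by simpa using hi)]
      simp

noncomputable def witness :
    List ((Fin n → Bool) → Fin n → Bool) → List (List (Fin (2 * n + 3)))
  | [] => []
  | g :: gs => (initProg n ++ stepProg g) :: gs.map stepProg

lemma flatten_take_witness (g : (Fin n → Bool) → Fin n → Bool)
    (gs : List ((Fin n → Bool) → Fin n → Bool)) (i : ℕ) :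
    ((witness (g :: gs)).take (i + 1)).flatten =
      initProg n ++ (((g :: gs).take (i + 1)).map stepProg).flatten := by
  simp [witness]

theorem seqWitness_witness (h : n ≤ 2 * n + 3) (gs : List ((Fin n → Bool) → Fin n → Bool)) :
    SeqWitness h (universalMap n) gs (witness gs) := by
  refine ⟨by cases gs <;> simp [witness],
    by cases gs <;> simp [witness, initProg, resetProg, stepProg], fun i hi x => ?_⟩
  obtain ⟨g, gs, rfl⟩ := List.exists_cons_of_length_pos (Nat.zero_lt_of_lt hi)
  rw [flatten_take_witness, applyInstrs_append, applyInstrs_initProg,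
    applyInstrs_flatten_take_stepProg _ hi, pr_eq, pr_eq]
  simp

lemma length_toggleProg_le (v : Fin n → Bool) : (toggleProg v).length ≤ n + 2 := by
  simpa [toggleProg] using (List.finRange n).length_filter_le v

lemma length_writeProg (w : Fin n → Bool) : (writeProg w).length = n + 2 := by
  have := (List.finRange n).length_eq_length_filter_add w
  simp only [List.length_finRange] at this
  simp [writeProg]
  omega

lemma length_caseProg_le (g : (Fin n → Bool) → Fin n → Bool) (v : Fin n → Bool) :
    (caseProg g v).length ≤ 3 * n + 6 := by
  simp only [caseProg, List.length_append, length_writeProg]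
  linarith [length_toggleProg_le v]

lemma length_stepProg_le (g : (Fin n → Bool) → Fin n → Bool) :
    (stepProg g).length ≤ (3 * n + 6) * 2 ^ n + 4 := by
  have := length_flatten_map_le (caseProg g) (length_caseProg_le g)
    (Finset.univ : Finset (Fin n → Bool)).toList
  simp only [Finset.length_toList, Finset.card_univ, Fintype.card_fun, Fintype.card_bool,
    Fintype.card_fin] at this
  simp only [stepProg, sweepProg, List.flatMap, List.length_append, resetProg,
    List.length_cons, List.length_nil]
  linarith

lemma length_flatten_witness_le (gs : List ((Fin n → Bool) → Fin n → Bool)) :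
    (witness gs).flatten.length ≤ n + 4 + gs.length * ((3 * n + 6) * 2 ^ n + 4) := by
  cases gs with
  | nil => simp [witness]
  | cons g gs =>
    have := length_flatten_map_le stepProg length_stepProg_le gs
    simp only [witness, initProg, resetProg, copyProg, List.flatten_cons, List.length_append,
      List.length_cons, List.length_nil, List.length_map, List.length_finRange]
    nlinarith [length_stepProg_le g]

lemma length_flatten_witness_le_of_nodup {gs : List ((Fin n → Bool) → Fin n → Bool)}
    (hgs : gs.Nodup) :
    (witness gs).flatten.length ≤
      3 * n * 2 ^ (n * 2 ^ n + n) + 15 * 2 ^ (n * 2 ^ n + n) := by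
  have hL : gs.length ≤ 2 ^ (n * 2 ^ n) := by
    simpa [Fintype.card_fun, ← pow_mul] using hgs.length_le_card
  have hn : n < 2 ^ n := Nat.lt_two_pow_self
  have hP : 1 ≤ 2 ^ (n * 2 ^ n) := Nat.one_le_two_pow
  calc (witness gs).flatten.length
      ≤ n + 4 + gs.length * ((3 * n + 6) * 2 ^ n + 4) := length_flatten_witness_le gs
    _ ≤ 5 * 2 ^ n + 2 ^ (n * 2 ^ n) * ((3 * n + 6) * 2 ^ n + 4) := by gcongr; omega
    _ ≤ 3 * n * 2 ^ (n * 2 ^ n + n) + 15 * 2 ^ (n * 2 ^ n + n) := by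
      rw [pow_add]; nlinarith

theorem seqWitness_conj_witness {A : Type*} (e : Bool ≃ A) (h : n ≤ 2 * n + 3)
    (gs : List ((Fin n → A) → Fin n → A)) :
    SeqWitness h ((coordEquiv e _).conj (universalMap n)) gs
      (witness (gs.map (coordEquiv e n).conj.symm)) := by
  have := (seqWitness_witness h (gs.map (coordEquiv e n).conj.symm)).conj e
  rwa [List.map_map, Equiv.self_comp_symm, List.map_id] at this

end UniversalMachine

/-- There is `C > 0` such that for every `n ≥ 2` and finite `A` with `|A| = 2`, there is
a complete `n`-universal transformation of size `2n + 3` whose maximal sequential time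
is at most `3n·2^(n·2^n + n) + C·2^(n·2^n + n)`. -/
theorem complete_universal_size_2n_plus_3_binary :
    ∃ C : ℕ, 0 < C ∧
      ∀ (n : ℕ), 2 ≤ n → ∀ (A : Type) [Fintype A], Fintype.card A = 2 →
        ∃ f : (Fin (2 * n + 3) → A) → Fin (2 * n + 3) → A,
          -- f is complete n-universal
          (∀ gs : List ((Fin n → A) → Fin n → A),
            ∃ hs, SeqWitness (by omega : n ≤ 2 * n + 3) f gs hs) ∧
          -- and its maximal sequential time satisfies the bound
          (∀ gs : List ((Fin n → A) → Fin n → A), gs.Nodup → (∀ g, g ∈ gs) →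
            ∃ hs, SeqWitness (by omega : n ≤ 2 * n + 3) f gs hs ∧
              hs.flatten.length ≤
                3 * n * 2 ^ (n * 2 ^ n + n) + C * 2 ^ (n * 2 ^ n + n)) := by
  refine ⟨15, by norm_num, fun n _ A _ hA => ?_⟩
  have e : Bool ≃ A := Fintype.equivOfCardEq (by rw [hA, Fintype.card_bool])
  refine ⟨(coordEquiv e _).conj (UniversalMachine.universalMap n),
    fun gs => ⟨_, UniversalMachine.seqWitness_conj_witness e _ gs⟩,
    fun gs hgs _ => ⟨_, UniversalMachine.seqWitness_conj_witness e _ gs, ?_⟩⟩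
  exact UniversalMachine.length_flatten_witness_le_of_nodup
    (hgs.map (coordEquiv e n).conj.symm.injective)
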